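/- Let S be a sequence over {O,U} of even length with |Φ(S)| even, and let S' be obtained from S by replacing one adjacent pair OU with UO. Then |Φ(S')| − |Φ(S)| = ±2; in particular |Φ(S')| is again even and |Φ(S')| ≠ |Φ(S)|. -/
import Mathlib


/-- The two-letter alphabet {O, U}. -/
inductive OULetter : Type
  | O : OULetter
  | U : OULetter
deriving DecidableEq

open OULetter

/-- The sign `ε` of the letter `X` at the (1-indexed) position `i`:
`+1` if (`X = O` and `i` is even) or (`X = U` and `i` is odd), and `-1` otherwise. -/
def eps (X : OULetter) (i : ℕ) : ℤ :=
  match X with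
  | O => if i % 2 = 0 then 1 else -1
  | U => if i % 2 = 1 then 1 else -1

/-- The sign sum `Σ_{i=1}^m ε(X_i)` of a sequence `S = X₁X₂…X_m`. -/
def signSum (S : List OULetter) : ℤ :=
  ∑ j : Fin S.length, eps (S.get j) (j.1 + 1)

/-- The OU number `Φ(S) = (1/2)·Σ_{i=1}^m ε(X_i)` of a sequence `S`. -/
def Phi (S : List OULetter) : ℚ := (signSum S : ℚ) / 2

/-- Shifted sign sum. -/
def gSum : List OULetter → ℕ → ℤ
  | [], _ => 0
  | x :: t, k => eps x (k + 1) + gSum t (k + 1)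

lemma gSum_eq (S : List OULetter) (k : ℕ) :
    ∑ j : Fin S.length, eps (S.get j) (j.1 + 1 + k) = gSum S k := by
  induction S generalizing k with
  | nil => simp [gSum]
  | cons x t ih =>
    show (∑ j : Fin (t.length + 1), eps ((x :: t).get j) (j.1 + 1 + k)) =
      eps x (k + 1) + gSum t (k + 1)
    rw [Fin.sum_univ_succ]
    congr 1
    · show eps x (0 + 1 + k) = eps x (k + 1)
      congr 1
      omega
    · rw [← ih (k + 1)]
      apply Finset.sum_congr rfl
      intro j _
      simp only [List.get, Fin.val_succ]
      congr 1
      omega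

lemma signSum_eq (S : List OULetter) : signSum S = gSum S 0 := by
  rw [← gSum_eq S 0, signSum]

lemma gSum_append (A B : List OULetter) (k : ℕ) :
    gSum (A ++ B) k = gSum A k + gSum B (k + A.length) := by
  induction A generalizing k with
  | nil => simp [gSum]
  | cons x t ih =>
    show eps x (k + 1) + gSum (t ++ B) (k + 1) =
      (eps x (k + 1) + gSum t (k + 1)) + gSum B (k + (t.length + 1))
    rw [ih (k + 1), show k + 1 + t.length = k + (t.length + 1) from by omega]
    ring

lemma key_diff (A B : List OULetter) :
    signSum (A ++ [U, O] ++ B) = signSum (A ++ [O, U] ++ B) + 4 ∨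
    signSum (A ++ [U, O] ++ B) = signSum (A ++ [O, U] ++ B) - 4 := by
  rw [signSum_eq, signSum_eq, gSum_append, gSum_append, gSum_append, gSum_append]
  simp only [List.length_cons, List.length_nil, gSum]
  rcases Nat.even_or_odd A.length with h | h
  · left
    obtain ⟨m, hm⟩ := h
    have h1 : (A.length + 1) % 2 = 1 := by omega
    have h2 : (A.length + 1 + 1) % 2 = 0 := by omega
    simp [eps, h1, h2]
    ring
  · right
    obtain ⟨m, hm⟩ := h
    have h1 : (A.length + 1) % 2 = 0 := by omega
    have h2 : (A.length + 1 + 1) % 2 = 1 := by omega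
    simp [eps, h1, h2]
    ring

/-- For a sequence S of even length whose cyclic OU number is even, replacing an adjacent
pair OU with UO changes the cyclic OU number by exactly plus or minus 2; in particular
it stays even and changes. -/
theorem abs_phi_swap_of_even (A B : List OULetter)
    (heven : Even (A ++ [O, U] ++ B).length)
    (hphi : ∃ z : ℤ, Even z ∧ |Phi (A ++ [O, U] ++ B)| = (z : ℚ)) :
    (|Phi (A ++ [U, O] ++ B)| - |Phi (A ++ [O, U] ++ B)| = 2 ∨
        |Phi (A ++ [U, O] ++ B)| - |Phi (A ++ [O, U] ++ B)| = -2) ∧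
      (∃ z : ℤ, Even z ∧ |Phi (A ++ [U, O] ++ B)| = (z : ℚ)) ∧
      |Phi (A ++ [U, O] ++ B)| ≠ |Phi (A ++ [O, U] ++ B)| := by
  obtain ⟨z, hz, habs⟩ := hphi
  set s : ℤ := signSum (A ++ [O, U] ++ B) with hs
  set s' : ℤ := signSum (A ++ [U, O] ++ B) with hs'
  have hd := key_diff A B
  rw [← hs, ← hs'] at hd
  have hPhiO : |Phi (A ++ [O, U] ++ B)| = ((|s| : ℤ) : ℚ) / 2 := by
    rw [Phi, ← hs, abs_div]
    norm_num [Int.cast_abs]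
  have hPhiU : |Phi (A ++ [U, O] ++ B)| = ((|s'| : ℤ) : ℚ) / 2 := by
    rw [Phi, ← hs', abs_div]
    norm_num [Int.cast_abs]
  have hsz : |s| = 2 * z := by
    rw [hPhiO] at habs
    have : ((|s| : ℤ) : ℚ) = ((2 * z : ℤ) : ℚ) := by
      rw [Int.cast_abs] at habs ⊢
      rw [Int.cast_mul]; norm_num; linarith
    exact_mod_cast this
  obtain ⟨w, hw⟩ := hz
  have hkey : (|s'| - |s| = 4 ∨ |s'| - |s| = -4) ∧ (4 : ℤ) ∣ |s'| := by
    rcases abs_cases s with ⟨e1, p1⟩ | ⟨e1, p1⟩ <;>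
      rcases abs_cases s' with ⟨e2, p2⟩ | ⟨e2, p2⟩ <;>
      rcases hd with h | h <;>
      constructor <;> omega
  obtain ⟨hdiff, h4s'⟩ := hkey
  obtain ⟨v, hv⟩ := h4s'
  refine ⟨?_, ⟨2 * v, ⟨v, by ring⟩, ?_⟩, ?_⟩
  · rcases hdiff with h | h
    · left
      rw [hPhiO, hPhiU]
      have : ((|s'| : ℤ) : ℚ) = ((|s| : ℤ) : ℚ) + 4 := by
        have h' : |s'| = |s| + 4 := by omega
        rw [h', Int.cast_add]; norm_num
      linarith
    · right
      rw [hPhiO, hPhiU]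
      have : ((|s'| : ℤ) : ℚ) = ((|s| : ℤ) : ℚ) - 4 := by
        have h' : |s'| = |s| - 4 := by omega
        rw [h', Int.cast_sub]; norm_num
      linarith
  · rw [hPhiU, hv]
    push_cast
    ring
  · rw [hPhiO, hPhiU]
    intro hcontra
    have h2 : |s'| = |s| := by
      have : ((|s'| : ℤ) : ℚ) = ((|s| : ℤ) : ℚ) := by linarith
      exact_mod_cast this
    omega
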